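/- arXiv:math/0603194 — 8 statements merged into one kernel-verified Lean document; each statement's English description precedes it below -/
import Mathlib

section
/- Let −1 < ζ ≤ 2 and define θ : ℝ → ℝ by θ(t) = 2 − 3·tanh²( t/√2 + artanh( √((2−ζ)/3) ) ). Then θ is twice continuously differentiable, θ''(t) + θ(t)² − 1 = 0 for all t, θ(0) = ζ, θ(t) → −1 as t → ∞, and moreover (1/2)θ'(t)² + (1/3)θ(t)³ − θ(t) = 2/3 for all t. -/
/-- The inverse hyperbolic tangent. -/
noncomputable def artanh (x : ℝ) : ℝ := (1 / 2) * Real.log ((1 + x) / (1 - x))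

/-- The explicit solution of `θ'' + θ² - 1 = 0` with `θ(0) = ζ` and `θ(∞) = -1`. -/
noncomputable def θsol (ζ : ℝ) (t : ℝ) : ℝ :=
  2 - 3 * Real.tanh (t / Real.sqrt 2 + artanh (Real.sqrt ((2 - ζ) / 3))) ^ 2

/-!
With `T = tanh (t / √2 + a)` one has `T' = (1 - T²) / √2`, so `θ = 2 - 3 T²` satisfies
`θ' = -3√2 T (1 - T²)` and `θ'' = -3 (1 - T²)(1 - 3 T²) = 1 - θ²`, for every phase `a`.
The energy `θ'²/2 + θ³/3 - θ` is then a polynomial identity in `T`, `θ → 2 - 3 = -1` because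
`T → 1`, and the phase `a = artanh √((2 - ζ)/3)` is chosen so that `θ(0) = 2 - 3 tanh² a = ζ`.
-/

open Filter Topology

namespace Real

theorem hasDerivAt_tanh (x : ℝ) : HasDerivAt tanh (1 - tanh x ^ 2) x := by
  have h := (hasDerivAt_sinh x).div (hasDerivAt_cosh x) (cosh_pos x).ne'
  rw [show tanh = sinh / cosh from funext tanh_eq_sinh_div_cosh]
  refine h.congr_deriv ?_
  rw [Pi.div_apply]
  field_simp

theorem contDiff_tanh {n : WithTop ℕ∞} : ContDiff ℝ n tanh := by
  rw [show tanh = sinh / cosh from funext tanh_eq_sinh_div_cosh]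
  exact contDiff_sinh.div contDiff_cosh fun x => (cosh_pos x).ne'

theorem tanh_eq_one_sub_exp_div (x : ℝ) :
    tanh x = (1 - exp (-2 * x)) / (1 + exp (-2 * x)) := by
  have hexp : exp (-2 * x) = exp (-x) * exp (-x) := by rw [← exp_add]; ring_nf
  have hinv : exp x * exp (-x) = 1 := by rw [← exp_add, add_neg_cancel, exp_zero]
  rw [tanh_eq, hexp]
  field_simp
  linear_combination 2 * exp (-x) * hinv

theorem tendsto_tanh_atTop : Tendsto tanh atTop (𝓝 1) := by
  have hexp : Tendsto (fun x : ℝ => exp (-2 * x)) atTop (𝓝 0) :=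
    tendsto_exp_atBot.comp (tendsto_id.const_mul_atTop_of_neg (by norm_num))
  have h := (tendsto_const_nhds (x := (1 : ℝ)).sub hexp).div
    (tendsto_const_nhds (x := (1 : ℝ)).add hexp) (by norm_num)
  rw [sub_zero, add_zero, div_one] at h
  exact h.congr fun x => (tanh_eq_one_sub_exp_div x).symm

end Real

theorem HasDerivAt.tanh {f : ℝ → ℝ} {f' x : ℝ} (hf : HasDerivAt f f' x) :
    HasDerivAt (fun y => Real.tanh (f y)) ((1 - Real.tanh (f x) ^ 2) * f') x :=
  (Real.hasDerivAt_tanh (f x)).comp x hf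

theorem artanh_eq_real_artanh {x : ℝ} (hx : x ∈ Set.Icc (-1) 1) :
    artanh x = Real.artanh x :=
  (Real.artanh_eq_half_log hx).symm

theorem hasDerivAt_div_const_add (c a t : ℝ) :
    HasDerivAt (fun t => t / c + a) (1 / c) t := by
  simpa using ((hasDerivAt_id t).div_const c).add_const a

noncomputable def tanhProfile (a t : ℝ) : ℝ :=
  2 - 3 * Real.tanh (t / Real.sqrt 2 + a) ^ 2

namespace tanhProfile

variable (a : ℝ)

theorem hasDerivAt (t : ℝ) :
    HasDerivAt (tanhProfile a)
      (-(3 * Real.sqrt 2) * Real.tanh (t / Real.sqrt 2 + a)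
        * (1 - Real.tanh (t / Real.sqrt 2 + a) ^ 2)) t := by
  have hphase := hasDerivAt_div_const_add (Real.sqrt 2) a t
  refine (((hphase.tanh.pow 2).const_mul 3).const_sub 2).congr_deriv ?_
  set T := Real.tanh (t / Real.sqrt 2 + a)
  field_simp
  linear_combination T * (1 - T ^ 2) * Real.sq_sqrt zero_le_two

theorem deriv_eq :
    deriv (tanhProfile a) = fun t => -(3 * Real.sqrt 2) * Real.tanh (t / Real.sqrt 2 + a)
      * (1 - Real.tanh (t / Real.sqrt 2 + a) ^ 2) :=
  funext fun t => (hasDerivAt a t).deriv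

theorem hasDerivAt_deriv (t : ℝ) :
    HasDerivAt (deriv (tanhProfile a)) (1 - tanhProfile a t ^ 2) t := by
  have hphase := hasDerivAt_div_const_add (Real.sqrt 2) a t
  rw [deriv_eq]
  refine ((hphase.tanh.const_mul _).mul ((hphase.tanh.pow 2).const_sub 1)).congr_deriv ?_
  simp only [tanhProfile, Pi.pow_apply]
  set T := Real.tanh (t / Real.sqrt 2 + a)
  field_simp
  ring

theorem contDiff {n : WithTop ℕ∞} : ContDiff ℝ n (tanhProfile a) :=
  contDiff_const.sub <| contDiff_const.mul <|
    (Real.contDiff_tanh.comp ((contDiff_id.div_const _).add contDiff_const)).pow 2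

theorem tendsto_atTop : Tendsto (tanhProfile a) atTop (𝓝 (-1)) := by
  have hphase : Tendsto (fun t => t / Real.sqrt 2 + a) atTop atTop :=
    tendsto_atTop_add_const_right _ a (tendsto_id.atTop_div_const (by positivity))
  have h := ((Real.tendsto_tanh_atTop.comp hphase).pow 2).const_mul 3 |>.const_sub 2
  norm_num at h
  exact h

theorem energy (t : ℝ) :
    1 / 2 * deriv (tanhProfile a) t ^ 2 + 1 / 3 * tanhProfile a t ^ 3 - tanhProfile a t
      = 2 / 3 := by
  rw [deriv_eq, tanhProfile]
  set T := Real.tanh (t / Real.sqrt 2 + a)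
  linear_combination (9 / 2 * T ^ 2 * (1 - T ^ 2) ^ 2) * Real.sq_sqrt zero_le_two

end tanhProfile

theorem θsol_zero {ζ : ℝ} (hζ₁ : -1 < ζ) (hζ₂ : ζ ≤ 2) : θsol ζ 0 = ζ := by
  have hnn : 0 ≤ (2 - ζ) / 3 := by linarith
  have hlt : Real.sqrt ((2 - ζ) / 3) < 1 := by
    rw [Real.sqrt_lt' one_pos]
    linarith
  have hpos := Real.sqrt_nonneg ((2 - ζ) / 3)
  rw [θsol, zero_div, zero_add, artanh_eq_real_artanh ⟨by linarith, hlt.le⟩,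
    Real.tanh_artanh ⟨by linarith, hlt⟩, Real.sq_sqrt hnn]
  ring

/-- For `-1 < ζ ≤ 2`, the function `θ(t) = 2 - 3 tanh²(t/√2 + artanh √((2-ζ)/3))` is a `C²`
solution of `θ'' + θ² - 1 = 0` with `θ(0) = ζ`, `θ(t) → -1` as `t → ∞`, and it satisfies the
energy identity `(1/2)θ'² + (1/3)θ³ - θ = 2/3`. -/
theorem stmt_3 (ζ : ℝ) (hζ₁ : -1 < ζ) (hζ₂ : ζ ≤ 2) :
    ContDiff ℝ 2 (θsol ζ) ∧
    (∀ t : ℝ, deriv (deriv (θsol ζ)) t + (θsol ζ t) ^ 2 - 1 = 0) ∧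
    θsol ζ 0 = ζ ∧
    Filter.Tendsto (θsol ζ) Filter.atTop (nhds (-1)) ∧
    (∀ t : ℝ, (1 / 2) * (deriv (θsol ζ) t) ^ 2 + (1 / 3) * (θsol ζ t) ^ 3 - θsol ζ t
      = 2 / 3) := by
  have hθ : θsol ζ = tanhProfile (artanh (Real.sqrt ((2 - ζ) / 3))) := rfl
  refine ⟨?_, fun t => ?_, θsol_zero hζ₁ hζ₂, ?_, tanhProfile.energy _⟩ <;> rw [hθ]
  · exact tanhProfile.contDiff _
  · rw [(tanhProfile.hasDerivAt_deriv _ t).deriv]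
    ring
  · exact tanhProfile.tendsto_atTop _
end

section
/- Let θ : [0,∞) → ℝ be a twice continuously differentiable function satisfying θ''(t) + θ(t)² − 1 = 0 for all t ≥ 0 and θ(t) → 1 as t → ∞. Then θ(t) = 1 for all t ≥ 0. -/
/-!
Along a solution of `θ'' = 1 - θ²` the energy `E = θ'²/2 + θ³/3 - θ` is conserved. If
`θ → 1`, the mean value theorem on `[t, t + 1]` gives times `tₙ → ∞` with `θ'(tₙ) → 0`, so the
conserved energy is `E(1, 0) = -2/3`, the energy of the centre. Since
`E(x, p) + 2/3 = p²/2 + (x - 1)²(x + 2)/3`, every value of `θ` is then `1` or `≤ -2`; as `θ`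
takes the value `1` and its range is connected, `θ ≡ 1`.
-/

open Set Filter Topology

theorem exists_seq_tendsto_atTop_and_deriv_tendsto_zero {f f' : ℝ → ℝ} {a l : ℝ}
    (hf : ∀ x, a < x → HasDerivAt f (f' x) x) (hlim : Tendsto f atTop (𝓝 l)) :
    ∃ u : ℕ → ℝ, Tendsto u atTop atTop ∧ Tendsto (f' ∘ u) atTop (𝓝 0) := by
  have hslope : ∀ n : ℕ, ∃ c ∈ Ioo (a + n + 1) (a + n + 2),
      f' c = (f (a + n + 2) - f (a + n + 1)) / ((a + n + 2) - (a + n + 1)) := fun n =>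
    exists_hasDerivAt_eq_slope f f' (by linarith) (fun x hx =>
      (hf x (by linarith [hx.1, n.cast_nonneg (α := ℝ)])).continuousAt.continuousWithinAt)
      fun x hx => hf x (by linarith [hx.1, n.cast_nonneg (α := ℝ)])
  choose u hu hfu using hslope
  have hshift : ∀ b : ℝ, Tendsto (fun n : ℕ => a + n + b) atTop atTop := fun b =>
    tendsto_atTop_add_const_right _ b
      (tendsto_atTop_add_const_left _ a tendsto_natCast_atTop_atTop)
  refine ⟨u, tendsto_atTop_mono (fun n => (hu n).1.le) (hshift 1), ?_⟩
  have hdiff : Tendsto (fun n : ℕ => f (a + n + 2) - f (a + n + 1)) atTop (𝓝 (l - l)) :=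
    (hlim.comp (hshift 2)).sub (hlim.comp (hshift 1))
  rw [sub_self] at hdiff
  refine hdiff.congr fun n => ?_
  simp only [Function.comp_apply, hfu n]
  ring

/-- The conserved energy of `x' = p, p' = 1 - x²`. -/
noncomputable def energy (x p : ℝ) : ℝ := p ^ 2 / 2 + x ^ 3 / 3 - x

theorem Filter.Tendsto.energy {α : Type*} {l : Filter α} {x p : α → ℝ} {a b : ℝ}
    (hx : Tendsto x l (𝓝 a)) (hp : Tendsto p l (𝓝 b)) :
    Tendsto (fun n => energy (x n) (p n)) l (𝓝 (energy a b)) :=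
  (((hp.pow 2).div_const 2).add ((hx.pow 3).div_const 3)).sub hx

theorem energy_sub_energy_one_zero (x p : ℝ) :
    energy x p - energy 1 0 = p ^ 2 / 2 + (x - 1) ^ 2 * (x + 2) / 3 := by
  unfold energy
  ring

theorem eq_one_or_le_neg_two_of_energy_eq {x p : ℝ} (h : energy x p = energy 1 0) :
    x = 1 ∨ x ≤ -2 := by
  have hsum := energy_sub_energy_one_zero x p
  rw [h, sub_self] at hsum
  by_contra! hx
  have : 0 < (x - 1) ^ 2 * (x + 2) :=
    mul_pos (sq_pos_iff.2 (sub_ne_zero.2 hx.1)) (by linarith)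
  nlinarith [sq_nonneg p]

theorem HasDerivWithinAt.energy {x p : ℝ → ℝ} {x' p' : ℝ} {s : Set ℝ} {t : ℝ}
    (hx : HasDerivWithinAt x x' s t) (hp : HasDerivWithinAt p p' s t) :
    HasDerivWithinAt (fun t => energy (x t) (p t)) (p t * p' + (x t ^ 2 - 1) * x') s t := by
  have h := (((hp.pow 2).div_const 2).add ((hx.pow 3).div_const 3)).sub hx
  refine h.congr_deriv ?_
  push_cast
  ring

theorem energy_eq_of_hasDerivWithinAt {x p p' : ℝ → ℝ} {a : ℝ}
    (hx : ∀ t ∈ Ici a, HasDerivWithinAt x (p t) (Ici a) t)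
    (hp : ∀ t ∈ Ici a, HasDerivWithinAt p (p' t) (Ici a) t)
    (hode : ∀ t ∈ Ici a, p' t = 1 - x t ^ 2) :
    ∀ t ∈ Ici a, energy (x t) (p t) = energy (x a) (p a) := by
  have hE : ∀ t ∈ Ici a, HasDerivWithinAt (fun t => energy (x t) (p t)) 0 (Ici a) t := by
    intro t ht
    refine ((hx t ht).energy (hp t ht)).congr_deriv ?_
    rw [hode t ht]
    ring
  intro t ht
  refine constant_of_has_deriv_right_zero (b := t) (fun s hs => (hE s hs.1).continuousWithinAt
    |>.mono Icc_subset_Ici_self) (fun s hs => (hE s hs.1).mono (Ici_subset_Ici.2 hs.1)) t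
    (right_mem_Icc.2 ht)

theorem IsPreconnected.eq_of_forall_eq_or_le {s : Set ℝ} (hs : IsPreconnected s) {f : ℝ → ℝ}
    (hf : ContinuousOn f s) {b c : ℝ} (hbc : b < c) (h : ∀ t ∈ s, f t = c ∨ f t ≤ b)
    {t₀ : ℝ} (ht₀ : t₀ ∈ s) (hft₀ : f t₀ = c) : ∀ t ∈ s, f t = c := by
  intro t ht
  refine (h t ht).resolve_right fun hle => ?_
  obtain ⟨r, hr, hfr⟩ : (b + c) / 2 ∈ f '' s :=
    hs.intermediate_value ht ht₀ hf ⟨by linarith, by linarith⟩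
  rcases h r hr with hr' | hr' <;> linarith

theorem stmt_4_general (θ θ' θ'' : ℝ → ℝ)
    (hd1 : ∀ t ∈ Ici (0 : ℝ), HasDerivWithinAt θ (θ' t) (Ici 0) t)
    (hd2 : ∀ t ∈ Ici (0 : ℝ), HasDerivWithinAt θ' (θ'' t) (Ici 0) t)
    (heq : ∀ t : ℝ, 0 ≤ t → θ'' t + (θ t) ^ 2 - 1 = 0)
    (hlim : Tendsto θ atTop (nhds 1)) :
    ∀ t : ℝ, 0 ≤ t → θ t = 1 := by
  have hE := energy_eq_of_hasDerivWithinAt hd1 hd2 fun t ht => by linarith [heq t ht]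
  obtain ⟨u, hu, hθ'u⟩ := exists_seq_tendsto_atTop_and_deriv_tendsto_zero
    (fun x hx => (hd1 x hx.le).hasDerivAt (Ici_mem_nhds hx)) hlim
  have hE₀ : energy (θ 0) (θ' 0) = energy 1 0 := by
    have hlimE : Tendsto (fun n => energy (θ (u n)) (θ' (u n))) atTop (𝓝 (energy 1 0)) :=
      (hlim.comp hu).energy hθ'u
    refine tendsto_nhds_unique (tendsto_const_nhds.congr' ?_) hlimE
    filter_upwards [hu.eventually_ge_atTop 0] with n hn using (hE (u n) hn).symm
  have hdich : ∀ t ∈ Ici (0 : ℝ), θ t = 1 ∨ θ t ≤ -2 := fun t ht =>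
    eq_one_or_le_neg_two_of_energy_eq ((hE t ht).trans hE₀)
  obtain ⟨t₀, ht₀, hθt₀⟩ := ((eventually_ge_atTop 0).and
    (hlim.eventually (eventually_gt_nhds (by norm_num : (-2 : ℝ) < 1)))).exists
  exact isPreconnected_Ici.eq_of_forall_eq_or_le
    (fun t ht => (hd1 t ht).continuousWithinAt) (by norm_num) hdich ht₀
    ((hdich t₀ ht₀).resolve_right (by linarith))

/-- A twice continuously differentiable solution of `θ'' + θ² - 1 = 0` on `[0,∞)` with
`θ(t) → 1` as `t → ∞` is identically `1`. -/
theorem stmt_4 (θ θ' θ'' : ℝ → ℝ)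
    (hd1 : ∀ t ∈ Ici (0 : ℝ), HasDerivWithinAt θ (θ' t) (Ici 0) t)
    (hd2 : ∀ t ∈ Ici (0 : ℝ), HasDerivWithinAt θ' (θ'' t) (Ici 0) t)
    (hc : ContinuousOn θ'' (Ici 0))
    (heq : ∀ t : ℝ, 0 ≤ t → θ'' t + (θ t) ^ 2 - 1 = 0)
    (hlim : Tendsto θ atTop (nhds 1)) :
    ∀ t : ℝ, 0 ≤ t → θ t = 1 :=
  stmt_4_general θ θ' θ'' hd1 hd2 heq hlim
end

section
/- Let τ > 0, let 0 ≤ ζ ≤ √3 and let d be a real number with d² ≤ 2ζ(1 − ζ²/3). Let T ∈ (0,∞] and let θ : [0,T) → ℝ be twice continuously differentiable with θ''(t) + τ·θ'(t) + θ(t)² − 1 = 0 on [0,T), θ(0) = ζ and θ'(0) = d. Then θ(t) ≥ 0 for all t ∈ [0,T), and there exists a constant M (depending only on ζ and d) such that θ(t) ≤ M and |θ'(t)| ≤ M for all t ∈ [0,T). -/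
open Set

/-- Paper's Lemma 3.1: for `τ > 0`, `0 ≤ ζ ≤ √3` and `d² ≤ 2ζ(1 - ζ²/3)`, any solution of
`θ'' + τθ' + θ² - 1 = 0` on `[0,T)` (with `T ∈ (0,∞]`) satisfying `θ(0) = ζ`, `θ'(0) = d`
is nonnegative, and `θ` and `θ'` are bounded by a constant depending only on `ζ` and `d`. -/
theorem stmt_6 (ζ d : ℝ) (hζ0 : 0 ≤ ζ) (hζ3 : ζ ≤ Real.sqrt 3)
    (hd : d ^ 2 ≤ 2 * ζ * (1 - ζ ^ 2 / 3)) :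
    ∃ M : ℝ, ∀ τ : ℝ, 0 < τ → ∀ T : EReal, 0 < T →
      ∀ θ θ' θ'' : ℝ → ℝ,
      (∀ t ∈ {s : ℝ | 0 ≤ s ∧ (s : EReal) < T},
          HasDerivWithinAt θ (θ' t) {s : ℝ | 0 ≤ s ∧ (s : EReal) < T} t) →
      (∀ t ∈ {s : ℝ | 0 ≤ s ∧ (s : EReal) < T},
          HasDerivWithinAt θ' (θ'' t) {s : ℝ | 0 ≤ s ∧ (s : EReal) < T} t) →
      ContinuousOn θ'' {s : ℝ | 0 ≤ s ∧ (s : EReal) < T} →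
      (∀ t ∈ {s : ℝ | 0 ≤ s ∧ (s : EReal) < T},
          θ'' t + τ * θ' t + (θ t) ^ 2 - 1 = 0) →
      θ 0 = ζ → θ' 0 = d →
      ∀ t ∈ {s : ℝ | 0 ≤ s ∧ (s : EReal) < T},
        0 ≤ θ t ∧ θ t ≤ M ∧ |θ' t| ≤ M := by
  refine ⟨Real.sqrt 3, ?_⟩
  intro τ hτ T hT θ θ' θ'' hθd hθ'd _hcont hode hθ0 hθ'0
  set S : Set ℝ := {s : ℝ | 0 ≤ s ∧ (s : EReal) < T} with hSdef
  have hsubIcc : ∀ t ∈ S, Icc (0:ℝ) t ⊆ S := by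
    intro t ht s hs
    exact ⟨hs.1, lt_of_le_of_lt (EReal.coe_le_coe_iff.2 hs.2) ht.2⟩
  have hcθ : ContinuousOn θ S := fun s hs => (hθd s hs).continuousWithinAt
  have hcθ' : ContinuousOn θ' S := fun s hs => (hθ'd s hs).continuousWithinAt
  -- energy decay
  have hE : ∀ t ∈ S, θ' t ^ 2 / 2 + θ t ^ 3 / 3 - θ t ≤ d ^ 2 / 2 + ζ ^ 3 / 3 - ζ := by
    intro t ht
    rcases eq_or_lt_of_le ht.1 with h | h
    · rw [← h, hθ0, hθ'0]
    · have hsub := hsubIcc t ht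
      have hIoo : Ioo (0:ℝ) t ⊆ S := fun s hs => hsub ⟨hs.1.le, hs.2.le⟩
      set E : ℝ → ℝ := fun x => θ' x ^ 2 / 2 + θ x ^ 3 / 3 - θ x with hEdef
      have hcontE : ContinuousOn E (Icc 0 t) :=
        ((((hcθ'.pow 2).div_const 2).add ((hcθ.pow 3).div_const 3)).sub hcθ).mono hsub
      have hderivE : ∀ s ∈ Ioo (0:ℝ) t, HasDerivAt E (-τ * θ' s ^ 2) s := by
        intro s hs
        have hnhds : S ∈ nhds s := Filter.mem_of_superset (isOpen_Ioo.mem_nhds hs) hIoo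
        have h1 : HasDerivAt θ (θ' s) s := (hθd s (hIoo hs)).hasDerivAt hnhds
        have h2 : HasDerivAt θ' (θ'' s) s := (hθ'd s (hIoo hs)).hasDerivAt hnhds
        have hode' := hode s (hIoo hs)
        have hE' : HasDerivAt E
            (((2:ℕ) * θ' s ^ 1 * θ'' s) / 2 + ((3:ℕ) * θ s ^ 2 * θ' s) / 3 - θ' s) s :=
          (((h2.pow 2).div_const 2).add ((h1.pow 3).div_const 3)).sub h1
        convert hE' using 1
        have h3 : θ'' s = 1 - τ * θ' s - θ s ^ 2 := by linarith
        rw [h3]; push_cast; ring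
      have hanti : AntitoneOn E (Icc 0 t) := by
        apply antitoneOn_of_deriv_nonpos (convex_Icc 0 t) hcontE
        · rw [interior_Icc]
          exact fun s hs => (hderivE s hs).differentiableAt.differentiableWithinAt
        · rw [interior_Icc]
          intro s hs
          rw [(hderivE s hs).deriv]
          nlinarith [sq_nonneg (θ' s)]
      have := hanti (left_mem_Icc.2 h.le) (right_mem_Icc.2 h.le) h.le
      simpa [hEdef, hθ0, hθ'0] using this
  have hE0 : d ^ 2 / 2 + ζ ^ 3 / 3 - ζ ≤ 0 := by nlinarith
  -- nonnegativity
  have hnonneg : ∀ t ∈ S, 0 ≤ θ t := by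
    intro t ht
    by_contra hneg
    push_neg at hneg
    have hsub := hsubIcc t ht
    have hcont : ContinuousOn θ (Icc 0 t) := hcθ.mono hsub
    set c := max (θ t) (-1) with hc
    have hmem : c ∈ Icc (θ t) (θ 0) := by
      refine ⟨le_max_left _ _, ?_⟩
      rw [hθ0]
      exact max_le (by linarith) (by linarith)
    obtain ⟨s, hs, hθs⟩ := intermediate_value_Icc' ht.1 hcont hmem
    have hEs := le_trans (hE s (hsub hs)) hE0
    rw [hθs] at hEs
    have hc1 : -1 ≤ c := le_max_right _ _
    have hc0 : c < 0 := max_lt hneg (by norm_num)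
    nlinarith [sq_nonneg (θ' s), mul_nonneg (by linarith : (0:ℝ) ≤ c + 1) (sq_nonneg c),
      mul_nonneg (by linarith : (0:ℝ) ≤ -c) (by linarith : (0:ℝ) ≤ c + 1)]
  -- conclusion
  intro t ht
  have h0 := hnonneg t ht
  have hEt := le_trans (hE t ht) hE0
  have hs3 : Real.sqrt 3 ^ 2 = 3 := Real.sq_sqrt (by norm_num)
  have hs3nn : (0:ℝ) ≤ Real.sqrt 3 := Real.sqrt_nonneg 3
  have hθle : θ t ≤ Real.sqrt 3 := by
    by_contra hgt
    push_neg at hgt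
    have h1 : 0 < θ t := lt_of_le_of_lt hs3nn hgt
    have h2 : 0 < θ t - Real.sqrt 3 := by linarith
    have h3 : 0 < θ t + Real.sqrt 3 := by linarith
    nlinarith [mul_pos (mul_pos h1 h2) h3, sq_nonneg (θ' t)]
  refine ⟨h0, hθle, ?_⟩
  have h34 : θ' t ^ 2 ≤ 3 := by
    nlinarith [mul_nonneg (sq_nonneg (θ t - 1)) (by linarith : (0:ℝ) ≤ θ t + 2)]
  calc |θ' t| = Real.sqrt (θ' t ^ 2) := (Real.sqrt_sq_eq_abs _).symm
    _ ≤ Real.sqrt 3 := Real.sqrt_le_sqrt h34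
end

section
/- Let τ > 0 and let θ : [0,∞) → ℝ be twice continuously differentiable with θ''(t) + τ·θ'(t) + θ(t)² − 1 = 0 for all t ≥ 0. Assume θ and θ' are bounded on [0,∞). Then ∫₀^∞ θ''(s)² ds < ∞ and θ''(t) → 0 as t → ∞. -/
/-!
Multiplying the equation by `θ'` shows that `E = θ'²/2 + θ³/3 - θ` satisfies `E' = -τ θ'²`.
Since `θ` is bounded, `E` is bounded below, so `θ'²` is integrable. Differentiating the equation
gives `θ''' = -τ θ'' - 2 θ θ'`; if `|θ| ≤ K`, the function `-θ''²/2 - (2K²/τ²) E` is bounded above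
and its derivative `τ θ''² + 2 θ θ' θ'' + (2K²/τ) θ'²` is at least `(τ/2) θ''²`, so `θ''²` is
integrable. Then `(θ''²)'` is integrable as well, hence `θ''²` has a limit at infinity, which must
vanish.
-/

open Set Filter MeasureTheory

theorem integrableOn_Ioi_deriv_of_nonneg_of_le {g g' : ℝ → ℝ} {a C : ℝ}
    (hderiv : ∀ x ∈ Ici a, HasDerivWithinAt g (g' x) (Ici a) x)
    (g'pos : ∀ x ∈ Ioi a, 0 ≤ g' x) (hC : ∀ x ∈ Ioi a, g x ≤ C) :
    IntegrableOn g' (Ioi a) := by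
  have hcont : ∀ x, ContinuousOn g (Icc a x) := fun x y hy =>
    (hderiv y hy.1).continuousWithinAt.mono Icc_subset_Ici_self
  have hderiv' : ∀ x, ∀ y ∈ Ioo a x, HasDerivAt g (g' y) y := fun x y hy =>
    (hderiv y hy.1.le).hasDerivAt (Ici_mem_nhds hy.1)
  have hloc : ∀ x, IntegrableOn g' (Ioc a x) := fun x =>
    intervalIntegral.integrableOn_deriv_of_nonneg (hcont x) (hderiv' x)
      fun y hy => g'pos y hy.1
  refine integrableOn_Ioi_of_intervalIntegral_norm_bounded (C - g a) a hloc tendsto_id ?_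
  filter_upwards [Ioi_mem_atTop a] with x (hx : a < x)
  calc ∫ y in a..x, ‖g' y‖ = ∫ y in a..x, g' y := by
        simp_rw [intervalIntegral.integral_of_le hx.le]
        exact setIntegral_congr_fun measurableSet_Ioc fun y hy => Real.norm_of_nonneg (g'pos y hy.1)
    _ = g x - g a := intervalIntegral.integral_eq_sub_of_hasDerivAt_of_le hx.le (hcont x)
        (hderiv' x) ((intervalIntegrable_iff_integrableOn_Ioc_of_le hx.le).2 (hloc x))
    _ ≤ C - g a := by linarith [hC x hx]

theorem tendsto_zero_of_sq_tendsto_zero {α : Type*} {l : Filter α} {f : α → ℝ}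
    (h : Tendsto (fun x => f x ^ 2) l (nhds 0)) : Tendsto f l (nhds 0) := by
  rw [tendsto_zero_iff_norm_tendsto_zero]
  simpa [Real.sqrt_sq_eq_abs] using h.sqrt

theorem half_mul_sq_le_of_abs_le {τ K x y z : ℝ} (hτ : 0 < τ) (hx : |x| ≤ K) :
    τ / 2 * z ^ 2 ≤ τ * z ^ 2 + 2 * x * y * z + 2 * K ^ 2 / τ * y ^ 2 := by
  have hxK : x ^ 2 ≤ K ^ 2 := sq_le_sq' (abs_le.1 hx).1 (abs_le.1 hx).2
  have key : τ * (τ / 2 * z ^ 2 + 2 * x * y * z + 2 * K ^ 2 / τ * y ^ 2)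
      = (τ * z + 2 * x * y) ^ 2 / 2 + 2 * (K ^ 2 - x ^ 2) * y ^ 2 := by
    field_simp
    ring
  have : 0 ≤ τ / 2 * z ^ 2 + 2 * x * y * z + 2 * K ^ 2 / τ * y ^ 2 := by
    refine (mul_nonneg_iff_of_pos_left hτ).1 ?_
    rw [key]
    have : 0 ≤ K ^ 2 - x ^ 2 := sub_nonneg.2 hxK
    positivity
  linarith

noncomputable def odeEnergy (θ θ' : ℝ → ℝ) (t : ℝ) : ℝ := θ' t ^ 2 / 2 + θ t ^ 3 / 3 - θ t

theorem neg_le_odeEnergy {θ θ' : ℝ → ℝ} {K t : ℝ} (hK : |θ t| ≤ K) :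
    -(K ^ 3 / 3 + K) ≤ odeEnergy θ θ' t := by
  have hcube : |θ t ^ 3| ≤ K ^ 3 := abs_pow (θ t) 3 ▸ pow_le_pow_left₀ (abs_nonneg _) hK 3
  unfold odeEnergy
  linarith [sq_nonneg (θ' t), (abs_le.1 hK).2, (abs_le.1 hcube).1]

structure SolvesODE (τ : ℝ) (θ θ' θ'' : ℝ → ℝ) : Prop where
  hasDerivWithinAt : ∀ t ∈ Ici (0 : ℝ), HasDerivWithinAt θ (θ' t) (Ici 0) t
  hasDerivWithinAt' : ∀ t ∈ Ici (0 : ℝ), HasDerivWithinAt θ' (θ'' t) (Ici 0) t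
  eq : ∀ t : ℝ, 0 ≤ t → θ'' t + τ * θ' t + θ t ^ 2 - 1 = 0

namespace SolvesODE

variable {τ K : ℝ} {θ θ' θ'' : ℝ → ℝ}

theorem hasDerivWithinAt_odeEnergy (h : SolvesODE τ θ θ' θ'') :
    ∀ t ∈ Ici (0 : ℝ), HasDerivWithinAt (odeEnergy θ θ') (-τ * θ' t ^ 2) (Ici 0) t := by
  intro t ht
  have hE : HasDerivWithinAt (fun s => θ' s ^ 2 / 2 + θ s ^ 3 / 3 - θ s) _ (Ici 0) t :=
    ((((h.hasDerivWithinAt' t ht).pow 2).div_const 2).add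
      (((h.hasDerivWithinAt t ht).pow 3).div_const 3)).sub (h.hasDerivWithinAt t ht)
  refine hE.congr_deriv ?_
  push_cast
  linear_combination θ' t * h.eq t ht

theorem hasDerivWithinAt_second_deriv (h : SolvesODE τ θ θ' θ'') :
    ∀ t ∈ Ici (0 : ℝ), HasDerivWithinAt θ'' (-τ * θ'' t - 2 * θ t * θ' t) (Ici 0) t := by
  have hθ'' : ∀ t ∈ Ici (0 : ℝ), θ'' t = 1 - θ t ^ 2 - τ * θ' t := fun t ht => by
    linear_combination h.eq t ht
  intro t ht
  have hrhs : HasDerivWithinAt (fun s => 1 - θ s ^ 2 - τ * θ' s) _ (Ici 0) t :=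
    ((hasDerivWithinAt_const t _ 1).sub ((h.hasDerivWithinAt t ht).pow 2)).sub
      ((h.hasDerivWithinAt' t ht).const_mul τ)
  refine (hrhs.congr hθ'' (hθ'' t ht)).congr_deriv ?_
  push_cast
  ring

theorem hasDerivAt_sq_second_deriv (h : SolvesODE τ θ θ' θ'') :
    ∀ t ∈ Ioi (0 : ℝ), HasDerivAt (fun s => θ'' s ^ 2)
      (2 * θ'' t * (-τ * θ'' t - 2 * θ t * θ' t)) t := fun t ht =>
  (((h.hasDerivWithinAt_second_deriv t (Ioi_subset_Ici_self ht)).hasDerivAt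
    (Ici_mem_nhds ht)).pow 2).congr_deriv (by push_cast; ring)

theorem integrableOn_sq_deriv (h : SolvesODE τ θ θ' θ'') (hτ : 0 < τ)
    (hK : ∀ t : ℝ, 0 ≤ t → |θ t| ≤ K) :
    IntegrableOn (fun t => θ' t ^ 2) (Ioi 0) := by
  refine integrableOn_Ioi_deriv_of_nonneg_of_le (g := fun t => -odeEnergy θ θ' t / τ)
    (C := (K ^ 3 / 3 + K) / τ) (fun t ht => ?_) (fun t _ => sq_nonneg _) (fun t ht => ?_)
  · refine ((h.hasDerivWithinAt_odeEnergy t ht).neg.div_const τ).congr_deriv ?_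
    field_simp
  · have := neg_le_odeEnergy (θ' := θ') (hK t (le_of_lt ht))
    gcongr
    linarith

theorem integrableOn_dissipation (h : SolvesODE τ θ θ' θ'') (hτ : 0 < τ)
    (hK : ∀ t : ℝ, 0 ≤ t → |θ t| ≤ K) :
    IntegrableOn (fun t => τ * θ'' t ^ 2 + 2 * θ t * θ' t * θ'' t + 2 * K ^ 2 / τ * θ' t ^ 2)
      (Ioi 0) := by
  refine integrableOn_Ioi_deriv_of_nonneg_of_le
    (g := fun t => -(θ'' t ^ 2 / 2) - 2 * K ^ 2 / τ ^ 2 * odeEnergy θ θ' t)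
    (C := 2 * K ^ 2 / τ ^ 2 * (K ^ 3 / 3 + K)) (fun t ht => ?_) (fun t ht => ?_) (fun t ht => ?_)
  · refine ((((h.hasDerivWithinAt_second_deriv t ht).pow 2).div_const 2).neg.sub
      ((h.hasDerivWithinAt_odeEnergy t ht).const_mul (2 * K ^ 2 / τ ^ 2))).congr_deriv ?_
    push_cast
    field_simp
    ring
  · have := half_mul_sq_le_of_abs_le (y := θ' t) (z := θ'' t) hτ (hK t (le_of_lt ht))
    have : 0 ≤ τ / 2 * θ'' t ^ 2 := by positivity
    linarith
  · have := neg_le_odeEnergy (θ' := θ') (hK t (le_of_lt ht))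
    have : 0 ≤ 2 * K ^ 2 / τ ^ 2 := by positivity
    nlinarith [sq_nonneg (θ'' t)]

theorem integrableOn_sq_second_deriv (h : SolvesODE τ θ θ' θ'') (hτ : 0 < τ)
    (hK : ∀ t : ℝ, 0 ≤ t → |θ t| ≤ K) :
    IntegrableOn (fun t => θ'' t ^ 2) (Ioi 0) := by
  have hcont : ContinuousOn θ'' (Ioi 0) := fun t ht =>
    (h.hasDerivWithinAt_second_deriv t (Ioi_subset_Ici_self ht)).continuousWithinAt.mono
      Ioi_subset_Ici_self
  refine ((h.integrableOn_dissipation hτ hK).const_mul (2 / τ)).mono'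
    ((hcont.pow 2).aestronglyMeasurable measurableSet_Ioi) ?_
  refine (ae_restrict_iff' measurableSet_Ioi).2 (ae_of_all _ fun t ht => ?_)
  have := half_mul_sq_le_of_abs_le (y := θ' t) (z := θ'' t) hτ (hK t (le_of_lt ht))
  rw [Real.norm_of_nonneg (sq_nonneg _), div_mul_eq_mul_div, le_div_iff₀ hτ]
  linarith

theorem integrableOn_deriv_sq_second_deriv (h : SolvesODE τ θ θ' θ'') (hτ : 0 < τ)
    (hK : ∀ t : ℝ, 0 ≤ t → |θ t| ≤ K) :
    IntegrableOn (fun t => 2 * θ'' t * (-τ * θ'' t - 2 * θ t * θ' t)) (Ioi 0) := by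
  refine IntegrableOn.congr_fun (((h.integrableOn_sq_deriv hτ hK).const_mul (4 * K ^ 2 / τ)).sub
    ((h.integrableOn_dissipation hτ hK).const_mul 2)) (fun t _ => ?_) measurableSet_Ioi
  simp only [Pi.sub_apply]
  ring

end SolvesODE

theorem stmt_9_general (τ : ℝ) (hτ : 0 < τ) (θ θ' θ'' : ℝ → ℝ)
    (hd1 : ∀ t ∈ Ici (0 : ℝ), HasDerivWithinAt θ (θ' t) (Ici 0) t)
    (hd2 : ∀ t ∈ Ici (0 : ℝ), HasDerivWithinAt θ' (θ'' t) (Ici 0) t)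
    (heq : ∀ t : ℝ, 0 ≤ t → θ'' t + τ * θ' t + (θ t) ^ 2 - 1 = 0)
    (hbθ : ∃ K : ℝ, ∀ t : ℝ, 0 ≤ t → |θ t| ≤ K) :
    IntegrableOn (fun s : ℝ => (θ'' s) ^ 2) (Ici 0) ∧
    Tendsto θ'' atTop (nhds 0) := by
  obtain ⟨K, hK⟩ := hbθ
  have h : SolvesODE τ θ θ' θ'' := ⟨hd1, hd2, heq⟩
  have hsq := h.integrableOn_sq_second_deriv hτ hK
  refine ⟨(integrableOn_Ici_iff_integrableOn_Ioi).2 hsq, tendsto_zero_of_sq_tendsto_zero ?_⟩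
  exact tendsto_zero_of_hasDerivAt_of_integrableOn_Ioi h.hasDerivAt_sq_second_deriv
    (h.integrableOn_deriv_sq_second_deriv hτ hK) hsq

/-- For `τ > 0`, any bounded twice continuously differentiable solution of
`θ'' + τθ' + θ² - 1 = 0` on `[0,∞)` with bounded first derivative satisfies
`∫₀^∞ θ''² < ∞` and `θ''(t) → 0` as `t → ∞`. -/
theorem stmt_9 (τ : ℝ) (hτ : 0 < τ) (θ θ' θ'' : ℝ → ℝ)
    (hd1 : ∀ t ∈ Ici (0 : ℝ), HasDerivWithinAt θ (θ' t) (Ici 0) t)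
    (hd2 : ∀ t ∈ Ici (0 : ℝ), HasDerivWithinAt θ' (θ'' t) (Ici 0) t)
    (hc : ContinuousOn θ'' (Ici 0))
    (heq : ∀ t : ℝ, 0 ≤ t → θ'' t + τ * θ' t + (θ t) ^ 2 - 1 = 0)
    (hbθ : ∃ K : ℝ, ∀ t : ℝ, 0 ≤ t → |θ t| ≤ K)
    (hbθ' : ∃ K : ℝ, ∀ t : ℝ, 0 ≤ t → |θ' t| ≤ K) :
    IntegrableOn (fun s : ℝ => (θ'' s) ^ 2) (Ici 0) ∧
    Tendsto θ'' atTop (nhds 0) :=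
  stmt_9_general τ hτ θ θ' θ'' hd1 hd2 heq hbθ
end

section
/- Let τ > 0, let T > 0, and let θ : ℝ → ℝ be a twice continuously differentiable T-periodic function satisfying θ''(t) + τ·θ'(t) + θ(t)² − 1 = 0 for all t ∈ ℝ. Then θ is constant. -/
/-!
The energy `E = θ'²/2 + θ³/3 - θ` of the undamped oscillator `θ'' + θ² - 1 = 0` satisfies
`E' = -τ θ'²` along solutions, so for `τ > 0` it is antitone. A periodic solution has periodic
energy, and an antitone periodic function is constant; hence `τ θ'² = -E' ≡ 0`, so `θ' ≡ 0`.
-/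

open Function

theorem Function.Periodic.of_hasDerivAt {𝕜 F : Type*} [NontriviallyNormedField 𝕜]
    [NormedAddCommGroup F] [NormedSpace 𝕜 F] {f f' : 𝕜 → F} {c : 𝕜} (hf : Periodic f c)
    (hd : ∀ x, HasDerivAt f (f' x) x) : Periodic f' c := fun x => by
  have hshift := (hd (x + c)).comp_add_const x c
  rw [hf.funext] at hshift
  exact hshift.unique (hd x)

theorem Antitone.eq_of_periodic {α β : Type*} [AddCommGroup α] [LinearOrder α]
    [IsOrderedAddMonoid α] [Archimedean α] [PartialOrder β] {f : α → β} {c : α}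
    (hf : Antitone f) (hper : Periodic f c) (hc : 0 < c) (a b : α) : f a = f b := by
  wlog hab : a ≤ b generalizing a b
  · exact (this b a (le_of_not_ge hab)).symm
  obtain ⟨n, hn⟩ := Archimedean.arch (b - a) hc
  have hb : b ≤ a + n • c := sub_le_iff_le_add'.mp hn
  refine le_antisymm ?_ (hf hab)
  calc f a = f (a + n • c) := ((hper.nsmul n) a).symm
    _ ≤ f b := hf hb

noncomputable def oscillatorEnergy (θ θ' : ℝ → ℝ) (t : ℝ) : ℝ :=
  θ' t ^ 2 / 2 + θ t ^ 3 / 3 - θ t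

section DampedOscillator

variable {τ : ℝ} {θ θ' θ'' : ℝ → ℝ}

theorem hasDerivAt_oscillatorEnergy (hd1 : ∀ t, HasDerivAt θ (θ' t) t)
    (hd2 : ∀ t, HasDerivAt θ' (θ'' t) t) (heq : ∀ t, θ'' t + τ * θ' t + θ t ^ 2 - 1 = 0)
    (t : ℝ) : HasDerivAt (oscillatorEnergy θ θ') (-(τ * θ' t ^ 2)) t := by
  have hE : HasDerivAt (oscillatorEnergy θ θ')
      (2 * θ' t ^ 1 * θ'' t / 2 + 3 * θ t ^ 2 * θ' t / 3 - θ' t) t :=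
    ((((hd2 t).pow 2).div_const 2).add (((hd1 t).pow 3).div_const 3)).sub (hd1 t)
  have hθ'' : θ'' t = 1 - θ t ^ 2 - τ * θ' t := by linarith [heq t]
  convert hE using 1
  rw [hθ'']
  ring

theorem antitone_oscillatorEnergy (hτ : 0 ≤ τ) (hd1 : ∀ t, HasDerivAt θ (θ' t) t)
    (hd2 : ∀ t, HasDerivAt θ' (θ'' t) t) (heq : ∀ t, θ'' t + τ * θ' t + θ t ^ 2 - 1 = 0) :
    Antitone (oscillatorEnergy θ θ') := by
  have hE := hasDerivAt_oscillatorEnergy hd1 hd2 heq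
  refine antitone_of_deriv_nonpos (fun t => (hE t).differentiableAt) fun t => ?_
  rw [(hE t).deriv]
  have := mul_nonneg hτ (sq_nonneg (θ' t))
  linarith

theorem deriv_eq_zero_of_periodic (hτ : 0 < τ) {T : ℝ} (hT : 0 < T) (hper : Periodic θ T)
    (hd1 : ∀ t, HasDerivAt θ (θ' t) t) (hd2 : ∀ t, HasDerivAt θ' (θ'' t) t)
    (heq : ∀ t, θ'' t + τ * θ' t + θ t ^ 2 - 1 = 0) (t : ℝ) : θ' t = 0 := by
  have hper' : Periodic θ' T := hper.of_hasDerivAt hd1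
  have hEper : Periodic (oscillatorEnergy θ θ') T := fun s => by
    simp only [oscillatorEnergy, hper s, hper' s]
  have hEconst : oscillatorEnergy θ θ' = fun _ => oscillatorEnergy θ θ' 0 :=
    funext fun s => (antitone_oscillatorEnergy hτ.le hd1 hd2 heq).eq_of_periodic hEper hT s 0
  have hE := hasDerivAt_oscillatorEnergy hd1 hd2 heq t
  rw [hEconst] at hE
  have hdissipation : τ * θ' t ^ 2 = 0 := by
    linarith [hE.unique (hasDerivAt_const t _)]
  simpa [hτ.ne'] using hdissipation

end DampedOscillator

theorem stmt_10_general (τ T : ℝ) (hτ : 0 < τ) (hT : 0 < T) (θ θ' θ'' : ℝ → ℝ)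
    (hd1 : ∀ t : ℝ, HasDerivAt θ (θ' t) t)
    (hd2 : ∀ t : ℝ, HasDerivAt θ' (θ'' t) t)
    (hper : Function.Periodic θ T)
    (heq : ∀ t : ℝ, θ'' t + τ * θ' t + (θ t) ^ 2 - 1 = 0) :
    ∀ s t : ℝ, θ s = θ t :=
  is_const_of_deriv_eq_zero (fun x => (hd1 x).differentiableAt) fun x => by
    rw [(hd1 x).deriv, deriv_eq_zero_of_periodic hτ hT hper hd1 hd2 heq x]

/-- For `τ > 0`, any twice continuously differentiable `T`-periodic solution of
`θ'' + τθ' + θ² - 1 = 0` on `ℝ` is constant (no cycles, by the Bendixson criterion). -/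
theorem stmt_10 (τ T : ℝ) (hτ : 0 < τ) (hT : 0 < T) (θ θ' θ'' : ℝ → ℝ)
    (hd1 : ∀ t : ℝ, HasDerivAt θ (θ' t) t)
    (hd2 : ∀ t : ℝ, HasDerivAt θ' (θ'' t) t)
    (hc : Continuous θ'')
    (hper : Function.Periodic θ T)
    (heq : ∀ t : ℝ, θ'' t + τ * θ' t + (θ t) ^ 2 - 1 = 0) :
    ∀ s t : ℝ, θ s = θ t :=
  stmt_10_general τ T hτ hT θ θ' θ'' hd1 hd2 hper heq
end

section
/- Let τ > 0, let ζ > −1 and let d be a real number with (1/2)d² + ζ(ζ²/3 − 1) < 2/3. Let T ∈ (0,∞] and let θ : [0,T) → ℝ be twice continuously differentiable with θ''(t) + τ·θ'(t) + θ(t)² − 1 = 0 on [0,T), θ(0) = ζ and θ'(0) = d. Then for all t ∈ [0,T) one has θ(t) > −1 and (1/2)θ'(t)² + (1/3)θ(t)³ − θ(t) < 2/3. -/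
open Set

set_option maxHeartbeats 1000000 in
/-- Invariance of the region `P = {(ζ,d) : ζ > -1, (1/2)d² + ζ(ζ²/3 - 1) < 2/3}`: for `τ > 0`,
any solution of `θ'' + τθ' + θ² - 1 = 0` on `[0,T)` (with `T ∈ (0,∞]`) starting in `P`
satisfies `θ(t) > -1` and `(1/2)θ'(t)² + (1/3)θ(t)³ - θ(t) < 2/3` for all `t ∈ [0,T)`. -/
theorem stmt_11 (τ ζ d : ℝ) (hτ : 0 < τ) (hζ : -1 < ζ)
    (hP : (1 / 2) * d ^ 2 + ζ * (ζ ^ 2 / 3 - 1) < 2 / 3)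
    (T : EReal) (hT : 0 < T) (θ θ' θ'' : ℝ → ℝ)
    (hd1 : ∀ t ∈ {s : ℝ | 0 ≤ s ∧ (s : EReal) < T},
        HasDerivWithinAt θ (θ' t) {s : ℝ | 0 ≤ s ∧ (s : EReal) < T} t)
    (hd2 : ∀ t ∈ {s : ℝ | 0 ≤ s ∧ (s : EReal) < T},
        HasDerivWithinAt θ' (θ'' t) {s : ℝ | 0 ≤ s ∧ (s : EReal) < T} t)
    (hc : ContinuousOn θ'' {s : ℝ | 0 ≤ s ∧ (s : EReal) < T})
    (heq : ∀ t ∈ {s : ℝ | 0 ≤ s ∧ (s : EReal) < T},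
        θ'' t + τ * θ' t + (θ t) ^ 2 - 1 = 0)
    (h0 : θ 0 = ζ) (h0' : θ' 0 = d) :
    ∀ t ∈ {s : ℝ | 0 ≤ s ∧ (s : EReal) < T},
      -1 < θ t ∧ (1 / 2) * (θ' t) ^ 2 + (1 / 3) * (θ t) ^ 3 - θ t < 2 / 3 := by
  set S : Set ℝ := {s : ℝ | 0 ≤ s ∧ (s : EReal) < T} with hS
  have hconv : Convex ℝ S := by
    have : S.OrdConnected := by
      constructor
      intro a ha b hb c hc
      exact ⟨le_trans ha.1 hc.1,
        lt_of_le_of_lt (EReal.coe_le_coe_iff.2 hc.2) hb.2⟩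
    exact this.convex
  have h0S : (0 : ℝ) ∈ S := ⟨le_refl 0, by simpa using hT⟩
  -- energy function
  set E : ℝ → ℝ := fun s => (1 / 2) * (θ' s) ^ 2 + (1 / 3) * (θ s) ^ 3 - θ s with hE
  have hθc : ContinuousOn θ S := fun t ht => (hd1 t ht).continuousWithinAt
  have hθ'c : ContinuousOn θ' S := fun t ht => (hd2 t ht).continuousWithinAt
  have hEd : ∀ t ∈ S, HasDerivWithinAt E (-τ * (θ' t) ^ 2) S t := by
    intro t ht
    have h1 : HasDerivWithinAt (fun s => (1 / 2) * (θ' s) ^ 2 + (1 / 3) * (θ s) ^ 3 - θ s)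
        ((1 / 2) * ((2 : ℕ) * (θ' t) ^ 1 * θ'' t)
          + (1 / 3) * ((3 : ℕ) * (θ t) ^ 2 * θ' t) - θ' t) S t := by
      exact ((((hd2 t ht).pow 2).const_mul _).add (((hd1 t ht).pow 3).const_mul _)).sub
        (hd1 t ht)
    have key : θ'' t = -(τ * θ' t + (θ t) ^ 2 - 1) := by
      have := heq t ht; linarith
    convert h1 using 1
    rw [key]; push_cast; ring
  have hEc : ContinuousOn E S :=
    ((continuousOn_const.mul (hθ'c.pow 2)).add (continuousOn_const.mul (hθc.pow 3))).sub hθc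
  have hanti : AntitoneOn E S := by
    apply antitoneOn_of_hasDerivWithinAt_nonpos hconv hEc
      (f' := fun t => -τ * (θ' t) ^ 2)
    · intro x hx
      exact (hEd x (interior_subset hx)).mono interior_subset
    · intro x hx
      have : 0 ≤ τ * (θ' x) ^ 2 := by positivity
      linarith
  have hE0 : E 0 < 2 / 3 := by
    simp only [hE, h0, h0']
    nlinarith [hP]
  have hEle : ∀ t ∈ S, E t < 2 / 3 := fun t ht =>
    lt_of_le_of_lt (hanti h0S ht ht.1) hE0
  intro t ht
  have hEt := hEle t ht
  refine ⟨?_, hEt⟩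
  by_contra hcon
  push_neg at hcon
  -- intermediate value: some s ∈ [0,t] with θ s = -1
  have hsub : Icc (0 : ℝ) t ⊆ S := fun s hs =>
    ⟨hs.1, lt_of_le_of_lt (EReal.coe_le_coe_iff.2 hs.2) ht.2⟩
  have hcont : ContinuousOn θ (Icc 0 t) := hθc.mono hsub
  have hmem : (-1 : ℝ) ∈ Icc (θ t) (θ 0) := ⟨hcon, by rw [h0]; linarith⟩
  obtain ⟨s, hsI, hsval⟩ := intermediate_value_Icc' ht.1 hcont hmem
  have hsS : s ∈ S := hsub hsI
  have := hEle s hsS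
  rw [hE] at this
  simp only [hsval] at this
  nlinarith [sq_nonneg (θ' s)]
end

section
/- Let τ > 0 and let a > −1. Let θ : [0,∞) → ℝ be twice continuously differentiable with θ''(t) + τ·θ'(t) + θ(t)² − 1 = 0 for all t ≥ 0, and suppose θ(t) ≥ a for all t ≥ 0. Then θ(t) → 1 as t → ∞. -/
/-!
The energy `E = θ'²/2 + θ³/3 - θ` of a solution satisfies `E' = -τ θ'² ≤ 0`. As `θ ≥ a > -1`,
`E ≥ -2/3`, so `E` converges; `E` also bounds `θ` from above, hence `θ'` and, through the
equation, `θ''`. A mean value argument on `E` over windows of fixed length then gives `θ' → 0`,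
so `θ³/3 - θ` converges. This cubic has finite level sets while the cluster values of the
continuous `θ` form an interval, so `θ` converges to some `c`. Then `θ'' → 1 - c²` while `θ'`
converges, which forces `c² = 1`, and `c ≥ a > -1` leaves `c = 1`.
-/

open Set Filter Topology Polynomial

theorem AntitoneOn.exists_tendsto_atTop_of_forall_ge {f : ℝ → ℝ} {T b : ℝ}
    (hf : AntitoneOn f (Ici T)) (hb : ∀ t ≥ T, b ≤ f t) : ∃ L, Tendsto f atTop (𝓝 L) := by
  have hanti : Antitone fun t => f (max T t) := fun s t hst =>
    hf (le_max_left T s) (le_max_left T t) (max_le_max le_rfl hst)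
  have hbdd : BddBelow (range fun t => f (max T t)) := by
    refine ⟨b, ?_⟩
    rintro _ ⟨t, rfl⟩
    exact hb _ (le_max_left T t)
  refine ⟨_, (tendsto_atTop_ciInf hanti hbdd).congr' ?_⟩
  filter_upwards [eventually_ge_atTop T] with t ht
  rw [max_eq_right ht]

theorem tendsto_zero_of_hasDerivAt_neg_mul_sq {E u u' : ℝ → ℝ} {c K L T : ℝ} (hc : 0 < c)
    (hE : ∀ t ≥ T, HasDerivAt E (-(c * u t ^ 2)) t) (hEL : Tendsto E atTop (𝓝 L))
    (hu : ∀ t ≥ T, HasDerivAt u (u' t) t) (hK : ∀ t ≥ T, |u' t| ≤ K) :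
    Tendsto u atTop (𝓝 0) := by
  rw [Metric.tendsto_atTop]
  intro ε hε
  obtain ⟨δ, hδ, hKδ⟩ := exists_pos_mul_lt (half_pos hε) K
  have hdrop : Tendsto (fun t => E t - E (t + δ)) atTop (𝓝 0) := by
    simpa using hEL.sub (hEL.comp (tendsto_atTop_add_const_right _ δ tendsto_id))
  obtain ⟨N, hN⟩ := eventually_atTop.mp
    (hdrop.eventually (gt_mem_nhds (show 0 < c * δ * (ε / 2) ^ 2 by positivity)))
  refine ⟨max N T, fun t ht => ?_⟩
  have hNt : N ≤ t := le_of_max_le_left ht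
  have hTt : T ≤ t := le_of_max_le_right ht
  obtain ⟨ξ, ⟨htξ, hξδ⟩, hslope⟩ := exists_hasDerivAt_eq_slope E (fun s => -(c * u s ^ 2))
    (lt_add_of_pos_right t hδ) (fun s hs => (hE s (hTt.trans hs.1)).continuousAt.continuousWithinAt)
    (fun s hs => hE s (hTt.trans hs.1.le))
  have hsmall : |u ξ| < ε / 2 := by
    rw [add_sub_cancel_left, eq_div_iff hδ.ne'] at hslope
    have hdropt := hN t hNt
    have hsq : u ξ ^ 2 < (ε / 2) ^ 2 :=
      lt_of_mul_lt_mul_left (a := c * δ) (by linarith) (by positivity)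
    exact abs_lt_of_sq_lt_sq hsq (by positivity)
  have hlip : |u ξ - u t| ≤ K * |ξ - t| := by
    simpa only [Real.norm_eq_abs] using (convex_Ici T).norm_image_sub_le_of_norm_hasDerivWithin_le
      (fun s hs => (hu s hs).hasDerivWithinAt) (fun s hs => (Real.norm_eq_abs _).trans_le (hK s hs))
      (mem_Ici.2 hTt) (mem_Ici.2 (hTt.trans htξ.le))
  have hK0 : 0 ≤ K := (abs_nonneg _).trans (hK T le_rfl)
  have hwindow : K * |ξ - t| ≤ K * δ := by
    gcongr
    rw [abs_of_pos (sub_pos.2 htξ)]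
    linarith
  rw [Real.dist_eq, sub_zero]
  linarith [abs_sub_abs_le_abs_sub (u t) (u ξ), abs_sub_comm (u t) (u ξ)]

theorem eq_zero_of_tendsto_of_tendsto_deriv {u u' : ℝ → ℝ} {T l m : ℝ}
    (hu : ∀ t ≥ T, HasDerivAt u (u' t) t) (hul : Tendsto u atTop (𝓝 l))
    (hum : Tendsto u' atTop (𝓝 m)) : m = 0 := by
  have hslope : ∀ t ≥ T, ∃ ξ ∈ Ioo t (t + 1), u' ξ = u (t + 1) - u t := fun t ht => by
    simpa using exists_hasDerivAt_eq_slope u u' (lt_add_one t)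
      (fun s hs => (hu s (ht.trans hs.1)).continuousAt.continuousWithinAt)
      (fun s hs => hu s (ht.trans hs.1.le))
  choose! ξ hξ hξu using hslope
  have hξtop : Tendsto ξ atTop atTop := by
    refine tendsto_atTop_mono' atTop ?_ tendsto_id
    filter_upwards [eventually_ge_atTop T] with t ht using (hξ t ht).1.le
  have hdiff : Tendsto (fun t => u (t + 1) - u t) atTop (𝓝 0) := by
    simpa using (hul.comp (tendsto_atTop_add_const_right _ 1 tendsto_id)).sub hul
  refine tendsto_nhds_unique_of_eventuallyEq (hum.comp hξtop) hdiff ?_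
  filter_upwards [eventually_ge_atTop T] with t ht using hξu t ht

theorem exists_tendsto_of_tendsto_comp_of_finite {f g : ℝ → ℝ} {T L : ℝ}
    (hf : ContinuousOn f (Ici T)) (hfa : IsBoundedUnder (· ≤ ·) atTop f)
    (hfb : IsBoundedUnder (· ≥ ·) atTop f) (hg : {x | g x = L}.Finite)
    (hgf : Tendsto (g ∘ f) atTop (𝓝 L)) : ∃ c, Tendsto f atTop (𝓝 c) := by
  have hlevel : Ioo (liminf f atTop) (limsup f atTop) ⊆ {x | g x = L} := by
    rintro e ⟨hde, hec⟩
    have hfreq : ∃ᶠ t in atTop, f t = e := by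
      rw [frequently_atTop]
      intro N
      obtain ⟨t₁, ht₁N, ht₁⟩ := frequently_atTop.mp
        (frequently_lt_of_lt_limsup hfb.isCoboundedUnder_flip hec) (max N T)
      obtain ⟨t₂, ht₂t₁, ht₂⟩ := frequently_atTop.mp
        (frequently_lt_of_liminf_lt hfa.isCoboundedUnder_flip hde) t₁
      obtain ⟨s, hs, hse⟩ := intermediate_value_Icc' ht₂t₁
        (hf.mono fun x hx => (le_of_max_le_right ht₁N).trans hx.1) ⟨ht₂.le, ht₁.le⟩
      exact ⟨s, (le_of_max_le_left ht₁N).trans hs.1, hse⟩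
    exact tendsto_nhds_unique_of_frequently_eq tendsto_const_nhds hgf
      (hfreq.mono fun t ht => congrArg g ht.symm)
  have hlim : liminf f atTop = limsup f atTop := by
    by_contra hne
    exact (Ioo_infinite ((liminf_le_limsup hfa hfb).lt_of_ne hne)).mono hlevel hg
  exact ⟨_, tendsto_of_liminf_eq_limsup hlim rfl hfa hfb⟩

namespace SuctionODE

noncomputable def cubicPotential (x : ℝ) : ℝ := x ^ 3 / 3 - x

noncomputable def energy (θ θ' : ℝ → ℝ) (t : ℝ) : ℝ := θ' t ^ 2 / 2 + cubicPotential (θ t)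

theorem le_max_of_cubicPotential_le {x C : ℝ} (h : cubicPotential x ≤ C) :
    x ≤ max 2 (3 * C) := by
  by_contra! hx
  rw [max_lt_iff] at hx
  unfold cubicPotential at h
  nlinarith [mul_pos (show 0 < x by linarith) (show 0 < x ^ 2 - 4 by nlinarith)]

theorem neg_two_thirds_le_cubicPotential {x : ℝ} (hx : -2 ≤ x) : -2 / 3 ≤ cubicPotential x := by
  -- `cubicPotential x + 2/3 = (x - 1)² (x + 2) / 3`
  unfold cubicPotential
  nlinarith [mul_nonneg (sq_nonneg (x - 1)) (show (0 : ℝ) ≤ x + 2 by linarith)]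

theorem finite_setOf_cubicPotential_eq (L : ℝ) : {x | cubicPotential x = L}.Finite := by
  set p : ℝ[X] := C (1 / 3) * X ^ 3 - X - C L
  have hp : ∀ x, p.eval x = cubicPotential x - L := fun x => by
    simp only [p, cubicPotential, eval_sub, eval_mul, eval_C, eval_pow, eval_X]
    ring
  have hp0 : p ≠ 0 := fun h => by
    have h0 := hp 0
    have h3 := hp 3
    rw [h, eval_zero] at h0 h3
    norm_num [cubicPotential] at h0 h3
    linarith
  refine (finite_setOfPred_isRoot hp0).subset fun x hx => ?_
  simp [IsRoot, hp, hx.out]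

variable {θ θ' θ'' : ℝ → ℝ} {τ T : ℝ}

theorem cubicPotential_le_energy (t : ℝ) : cubicPotential (θ t) ≤ energy θ θ' t := by
  unfold energy
  linarith [sq_nonneg (θ' t)]

theorem hasDerivAt_energy {t : ℝ} (hθ : HasDerivAt θ (θ' t) t) (hθ' : HasDerivAt θ' (θ'' t) t)
    (hode : θ'' t + τ * θ' t + θ t ^ 2 - 1 = 0) :
    HasDerivAt (energy θ θ') (-(τ * θ' t ^ 2)) t := by
  have h := ((hθ'.pow 2).div_const 2).add (((hθ.pow 3).div_const 3).sub hθ)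
  refine h.congr_deriv ?_
  push_cast
  linear_combination θ' t * hode

theorem antitoneOn_energy (hτ : 0 ≤ τ) (hθ : ∀ t ≥ T, HasDerivAt θ (θ' t) t)
    (hθ' : ∀ t ≥ T, HasDerivAt θ' (θ'' t) t)
    (hode : ∀ t ≥ T, θ'' t + τ * θ' t + θ t ^ 2 - 1 = 0) :
    AntitoneOn (energy θ θ') (Ici T) := by
  have hE : ∀ t ≥ T, HasDerivAt (energy θ θ') (-(τ * θ' t ^ 2)) t := fun t ht =>
    hasDerivAt_energy (hθ t ht) (hθ' t ht) (hode t ht)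
  refine antitoneOn_of_hasDerivWithinAt_nonpos (convex_Ici T)
    (fun t ht => (hE t ht).continuousAt.continuousWithinAt)
    (fun t ht => (hE t (interior_subset ht)).hasDerivWithinAt) fun t _ => ?_
  exact neg_nonpos.2 (mul_nonneg hτ (sq_nonneg _))

theorem exists_abs_secondDeriv_le {M C : ℝ} (hτ : 0 ≤ τ)
    (hode : ∀ t ≥ T, θ'' t + τ * θ' t + θ t ^ 2 - 1 = 0) (hlb : ∀ t ≥ T, -1 ≤ θ t)
    (hub : ∀ t ≥ T, θ t ≤ M) (hE : ∀ t ≥ T, energy θ θ' t ≤ C) :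
    ∃ K, ∀ t ≥ T, |θ'' t| ≤ K := by
  refine ⟨2 + M ^ 2 + τ * (2 * C + 3), fun t ht => ?_⟩
  have hθ : θ t ^ 2 ≤ 1 + M ^ 2 := by
    rcases le_total 0 (θ t) with h | h <;> nlinarith [hlb t ht, hub t ht]
  have hθ' : θ' t ^ 2 ≤ 2 * C + 4 / 3 := by
    have := neg_two_thirds_le_cubicPotential (show -2 ≤ θ t by linarith [hlb t ht])
    unfold energy at hE
    linarith [hE t ht]
  have hθ'abs : |θ' t| ≤ 2 * C + 3 := by
    rw [abs_le]
    constructor <;> nlinarith [sq_nonneg (θ' t + 1), sq_nonneg (θ' t - 1)]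
  have hθ'' : θ'' t = 1 - θ t ^ 2 - τ * θ' t := by linarith [hode t ht]
  rw [hθ'', abs_le]
  have := abs_le.1 hθ'abs
  constructor <;> nlinarith [sq_nonneg (θ t)]

theorem tendsto_one_of_lower_bound {a : ℝ} (hτ : 0 < τ) (ha : -1 < a)
    (hθ : ∀ t ≥ T, HasDerivAt θ (θ' t) t) (hθ' : ∀ t ≥ T, HasDerivAt θ' (θ'' t) t)
    (hode : ∀ t ≥ T, θ'' t + τ * θ' t + θ t ^ 2 - 1 = 0) (hlb : ∀ t ≥ T, a ≤ θ t) :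
    Tendsto θ atTop (𝓝 1) := by
  have hlb' : ∀ t ≥ T, -1 ≤ θ t := fun t ht => ha.le.trans (hlb t ht)
  have hanti := antitoneOn_energy hτ.le hθ hθ' hode
  have hE_le : ∀ t ≥ T, energy θ θ' t ≤ energy θ θ' T := fun t ht =>
    hanti self_mem_Ici ht ht
  have hub : ∀ t ≥ T, θ t ≤ max 2 (3 * energy θ θ' T) := fun t ht =>
    le_max_of_cubicPotential_le ((cubicPotential_le_energy t).trans (hE_le t ht))
  obtain ⟨L, hEL⟩ := hanti.exists_tendsto_atTop_of_forall_ge fun t ht =>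
    (neg_two_thirds_le_cubicPotential (by linarith [hlb' t ht])).trans (cubicPotential_le_energy t)
  obtain ⟨K, hK⟩ := exists_abs_secondDeriv_le hτ.le hode hlb' hub hE_le
  have hθ'0 : Tendsto θ' atTop (𝓝 0) := tendsto_zero_of_hasDerivAt_neg_mul_sq hτ
    (fun t ht => hasDerivAt_energy (hθ t ht) (hθ' t ht) (hode t ht)) hEL hθ' hK
  have hV : Tendsto (fun t => cubicPotential (θ t)) atTop (𝓝 L) := by
    simpa [energy] using hEL.sub ((hθ'0.pow 2).div_const 2)
  obtain ⟨c, hc⟩ := exists_tendsto_of_tendsto_comp_of_finite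
    (fun t ht => (hθ t ht).continuousAt.continuousWithinAt)
    ⟨_, eventually_map.2 (eventually_atTop.2 ⟨T, hub⟩)⟩
    ⟨_, eventually_map.2 (eventually_atTop.2 ⟨T, hlb⟩)⟩ (finite_setOf_cubicPotential_eq L) hV
  have hθ'' : Tendsto θ'' atTop (𝓝 (1 - c ^ 2 - τ * 0)) := by
    refine ((tendsto_const_nhds.sub (hc.pow 2)).sub (hθ'0.const_mul τ)).congr' ?_
    filter_upwards [eventually_ge_atTop T] with t ht
    linarith [hode t ht]
  have hc2 := eq_zero_of_tendsto_of_tendsto_deriv hθ' hθ'0 hθ''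
  have hac : a ≤ c := ge_of_tendsto hc (eventually_atTop.2 ⟨T, hlb⟩)
  obtain rfl : c = 1 := by nlinarith
  exact hc

end SuctionODE

theorem stmt_14_general (τ a : ℝ) (hτ : 0 < τ) (ha : -1 < a) (θ θ' θ'' : ℝ → ℝ)
    (hd1 : ∀ t ∈ Ici (0 : ℝ), HasDerivWithinAt θ (θ' t) (Ici 0) t)
    (hd2 : ∀ t ∈ Ici (0 : ℝ), HasDerivWithinAt θ' (θ'' t) (Ici 0) t)
    (heq : ∀ t : ℝ, 0 ≤ t → θ'' t + τ * θ' t + (θ t) ^ 2 - 1 = 0)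
    (hlb : ∀ t : ℝ, 0 ≤ t → a ≤ θ t) :
    Tendsto θ atTop (nhds 1) :=
  SuctionODE.tendsto_one_of_lower_bound (T := 1) hτ ha
    (fun t ht => (hd1 t (mem_Ici.2 (by linarith))).hasDerivAt (Ici_mem_nhds (by linarith)))
    (fun t ht => (hd2 t (mem_Ici.2 (by linarith))).hasDerivAt (Ici_mem_nhds (by linarith)))
    (fun t ht => heq t (by linarith)) (fun t ht => hlb t (by linarith))

/-- For `τ > 0`, any global solution of `θ'' + τθ' + θ² - 1 = 0` on `[0,∞)` which is bounded
from below by some `a > -1` tends to `1` at infinity. -/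
theorem stmt_14 (τ a : ℝ) (hτ : 0 < τ) (ha : -1 < a) (θ θ' θ'' : ℝ → ℝ)
    (hd1 : ∀ t ∈ Ici (0 : ℝ), HasDerivWithinAt θ (θ' t) (Ici 0) t)
    (hd2 : ∀ t ∈ Ici (0 : ℝ), HasDerivWithinAt θ' (θ'' t) (Ici 0) t)
    (hc : ContinuousOn θ'' (Ici 0))
    (heq : ∀ t : ℝ, 0 ≤ t → θ'' t + τ * θ' t + (θ t) ^ 2 - 1 = 0)
    (hlb : ∀ t : ℝ, 0 ≤ t → a ≤ θ t) :
    Tendsto θ atTop (nhds 1) :=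
  stmt_14_general τ a hτ ha θ θ' θ'' hd1 hd2 heq hlb
end

section
/- Let ν > 0, U_∞ > 0 and τ be real numbers, and let f : ℝ → ℝ be three times continuously differentiable with f'''(t) + τ·f''(t) + f'(t)² − 1 = 0 for all t. Define ψ(x,y) = √(ν U_∞) · f( √(U_∞/ν) · y/x ) + √(ν U_∞) · τ · log x for x > 0, y ∈ ℝ. Then for all x > 0 and all y, ∂_yψ · ∂²_{xy}ψ − ∂_xψ · ∂²_{yy}ψ = ν · ∂³_{yyy}ψ − U_∞² · x^{−3}. -/
/-- The pseudo-similarity stream function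
`ψ(x,y) = √(νU∞) f(√(U∞/ν) y / x) + √(νU∞) τ log x`. -/
noncomputable def pseudoStream (ν U τ : ℝ) (f : ℝ → ℝ) (x y : ℝ) : ℝ :=
  Real.sqrt (ν * U) * f (Real.sqrt (U / ν) * y / x) + Real.sqrt (ν * U) * τ * Real.log x

/-!
Write `a = √(νU∞)`, `b = √(U∞/ν)` and `η = b y / x`; only `ν b = a` and `a b = U∞` matter.
Since `ψ(x, ·)` is `a f` composed with the dilation by `b / x`, its `y`-derivatives are
`a (b/x)ⁿ f⁽ⁿ⁾(η)`, while `ψ_x = (a τ - a η f'(η)) / x` and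
`ψ_xy = -(a b / x²) (f'(η) + η f''(η))`. The `η f' f''` terms cancel on the convective side,
which becomes `-(a b)² x⁻³ (f'² + τ f'')`, and `ν ψ_yyy = (a b)² x⁻³ f'''` because `ν b = a`;
the equation for `f` closes the identity.
-/

noncomputable def similarityStream (a b τ : ℝ) (f : ℝ → ℝ) (x y : ℝ) : ℝ :=
  a * f (b * y / x) + a * τ * Real.log x

theorem deriv_const_mul_comp_mul {𝕜 : Type*} [NontriviallyNormedField 𝕜] (c k : 𝕜)
    (g : 𝕜 → 𝕜) : deriv (fun y => c * g (k * y)) = fun y => c * k * deriv g (k * y) := by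
  ext y
  rw [deriv_const_mul_field, deriv_comp_mul_left k g y, smul_eq_mul, mul_assoc]

theorem hasDerivAt_const_div {𝕜 : Type*} [NontriviallyNormedField 𝕜] (c : 𝕜) {x : 𝕜}
    (hx : x ≠ 0) : HasDerivAt (fun x => c / x) (-(c / x) / x) x := by
  simpa [div_eq_mul_inv, pow_two, mul_assoc] using (hasDerivAt_inv hx).const_mul c

section SimilarityStream

variable {a b τ : ℝ} {f : ℝ → ℝ}

theorem similarityStream_apply_eq (x : ℝ) :
    (fun y => similarityStream a b τ f x y) =
      fun y => a * f (b / x * y) + a * τ * Real.log x := by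
  ext y
  rw [similarityStream, div_mul_eq_mul_div]

theorem deriv_similarityStream_right (x : ℝ) :
    deriv (fun y => similarityStream a b τ f x y) =
      fun y => a * (b / x) * deriv f (b / x * y) := by
  rw [similarityStream_apply_eq, deriv_add_const', deriv_const_mul_comp_mul]

theorem hasDerivAt_similarityStream_left {x : ℝ} (y : ℝ) (hx : x ≠ 0)
    (hf : DifferentiableAt ℝ f (b * y / x)) :
    HasDerivAt (fun x' => similarityStream a b τ f x' y)
      (a * τ / x - a * deriv f (b * y / x) * (b * y / x) / x) x := by
  have := ((hf.hasDerivAt.comp x (hasDerivAt_const_div (b * y) hx)).const_mul a).add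
    ((Real.hasDerivAt_log hx).const_mul (a * τ))
  exact this.congr_deriv (by ring)

theorem hasDerivAt_deriv_similarityStream_right_left {x : ℝ} (y : ℝ) (hx : x ≠ 0)
    (hf' : DifferentiableAt ℝ (deriv f) (b * y / x)) :
    HasDerivAt (fun x' => deriv (fun y' => similarityStream a b τ f x' y') y)
      (-(a * b / x) / x *
        (deriv f (b * y / x) + deriv (deriv f) (b * y / x) * (b * y / x))) x := by
  have hfun : (fun x' => deriv (fun y' => similarityStream a b τ f x' y') y) =
      fun x' => a * b / x' * deriv f (b * y / x') := by
    funext x'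
    simp only [deriv_similarityStream_right]
    rw [mul_div_assoc, div_mul_eq_mul_div]
  rw [hfun]
  refine ((hasDerivAt_const_div (a * b) hx).mul
    (hf'.hasDerivAt.comp x (hasDerivAt_const_div (b * y) hx))).congr_deriv ?_
  simp only [Function.comp_apply]
  ring

end SimilarityStream

theorem similarityStream_boundaryLayer {ν a b τ : ℝ} (hνb : ν * b = a) {f : ℝ → ℝ}
    {x : ℝ} (y : ℝ) (hx : x ≠ 0) (hf : DifferentiableAt ℝ f (b * y / x))
    (hf' : DifferentiableAt ℝ (deriv f) (b * y / x))
    (hode : deriv (deriv (deriv f)) (b * y / x) + τ * deriv (deriv f) (b * y / x) +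
      deriv f (b * y / x) ^ 2 - 1 = 0) :
    deriv (fun y' => similarityStream a b τ f x y') y *
        deriv (fun x' => deriv (fun y' => similarityStream a b τ f x' y') y) x -
      deriv (fun x' => similarityStream a b τ f x' y) x *
        deriv (deriv (fun y' => similarityStream a b τ f x y')) y =
    ν * deriv (deriv (deriv (fun y' => similarityStream a b τ f x y'))) y -
      (a * b) ^ 2 * x ^ (-3 : ℤ) := by
  rw [(hasDerivAt_similarityStream_left y hx hf).deriv,
    (hasDerivAt_deriv_similarityStream_right_left y hx hf').deriv, deriv_similarityStream_right,
    deriv_const_mul_comp_mul, deriv_const_mul_comp_mul, zpow_neg, zpow_ofNat]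
  simp only [div_mul_eq_mul_div]
  linear_combination (-(a * b) ^ 2 / x ^ 3) * hode -
    (a * b ^ 2 / x ^ 3 * deriv (deriv (deriv f)) (b * y / x)) * hνb

theorem mul_sqrt_div_eq_sqrt_mul {ν : ℝ} (hν : 0 < ν) (U : ℝ) : ν * √(U / ν) = √(ν * U) := by
  rw [show ν * U = ν ^ 2 * (U / ν) by field_simp, Real.sqrt_mul (sq_nonneg ν),
    Real.sqrt_sq hν.le]

theorem sqrt_mul_mul_sqrt_div {ν U : ℝ} (hν : 0 < ν) (hU : 0 ≤ U) :
    √(ν * U) * √(U / ν) = U := by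
  rw [← Real.sqrt_mul (by positivity), show ν * U * (U / ν) = U * U by field_simp,
    Real.sqrt_mul_self hU]

/-- If `f''' + τ f'' + (f')² - 1 = 0`, then the pseudo-similarity stream function solves the
boundary-layer equation `ψ_y ψ_xy - ψ_x ψ_yy = ν ψ_yyy - U∞² x⁻³` for all `x > 0`. -/
theorem stmt_15 (ν U τ : ℝ) (hν : 0 < ν) (hU : 0 < U) (f : ℝ → ℝ)
    (hf : ContDiff ℝ 3 f)
    (hode : ∀ t : ℝ,
      deriv (deriv (deriv f)) t + τ * deriv (deriv f) t + (deriv f t) ^ 2 - 1 = 0) :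
    ∀ x : ℝ, 0 < x → ∀ y : ℝ,
      deriv (fun y' => pseudoStream ν U τ f x y') y *
          deriv (fun x' => deriv (fun y' => pseudoStream ν U τ f x' y') y) x -
        deriv (fun x' => pseudoStream ν U τ f x' y) x *
          deriv (deriv (fun y' => pseudoStream ν U τ f x y')) y =
      ν * deriv (deriv (deriv (fun y' => pseudoStream ν U τ f x y'))) y -
        U ^ 2 * x ^ (-3 : ℤ) := by
  intro x hx y
  have h := similarityStream_boundaryLayer (mul_sqrt_div_eq_sqrt_mul hν U) y hx.ne'
    (hf.differentiable (by norm_num) _)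
    ((hf.of_le (by norm_num)).differentiable_deriv_two _) (hode _)
  rwa [sqrt_mul_mul_sqrt_div hν hU.le] at h
end
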